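/- arXiv:1009.6203 — 2 statements merged into one kernel-verified Lean document; each statement's English description precedes it below -/
import Mathlib

section
/- Let m ≥ 1 and consider the standard action of the orthogonal Lie algebra so(m) on V = ℂ^m with its standard symmetric form. For N < m, the space of so(m)-invariants in V^{⊗N} is zero if N is odd, and if N is even it is spanned by the tensors obtained from permutations of (Σ_i e_i ⊗ e_i)^{⊗ N/2}, where {e_i} is an orthonormal basis; moreover these spanning tensors are linearly independent when m ≥ N (first and second fundamental theorems of invariant theory for O(m), infinitesimal form, in the stable range). -/
open scoped TensorProduct
open Matrix

noncomputable section

/-- `V = ℂ^m` with its standard symmetric form. -/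
abbrev Vm (m : ℕ) := Fin m → ℂ

/-- The `N`-th tensor power of `V`. -/
abbrev Tens (m N : ℕ) := ⨂[ℂ] _i : Fin N, Vm m

/-- The diagonal (derivation) action of a matrix on `V^{⊗N}`. -/
def rho {m N : ℕ} (A : Matrix (Fin m) (Fin m) ℂ) : Tens m N →ₗ[ℂ] Tens m N :=
  ∑ j : Fin N, PiTensorProduct.map
    (Function.update (fun _ : Fin N => (LinearMap.id : Vm m →ₗ[ℂ] Vm m)) j A.mulVecLin)

/-- The submodule of `so(m)`-invariants in `V^{⊗N}`. -/
def InvSub (m N : ℕ) : Submodule ℂ (Tens m N) :=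
  ⨅ (A : Matrix (Fin m) (Fin m) ℂ) (_ : Aᵀ = -A), LinearMap.ker (rho A)

/-- The invariant tensor attached to a permutation `σ` (i.e. to the perfect matching
obtained by permuting the factors of `ω^{⊗N/2}`, `ω = Σ_i e_i ⊗ e_i`). -/
def matchTensor (m r : ℕ) (σ : Equiv.Perm (Fin (2 * r))) : Tens m (2 * r) :=
  ∑ g : Fin r → Fin m,
    PiTensorProduct.tprod ℂ (fun j =>
      Pi.single (g ⟨(σ.symm j : ℕ) / 2, by have := (σ.symm j).isLt; omega⟩) (1 : ℂ))

/-!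
In the basis `e_f = e_{f 1} ⊗ ⋯ ⊗ e_{f N}` (`f : Fin N → Fin m` a colouring of the positions),
invariance under `E_ab - E_ba` is a linear relation among the coefficients `c f`. Because
`N < m`, every colouring misses some colour `b`; recolouring one occurrence of `f j₀` by `b`
and applying the relation for `(f j₀, b)` writes `c f` as a sum over the other occurrences of the
colour `f j₀`. Hence `c f = 0` if a colour occurs once, a colour occurring three or more times
can be split off into a fresh colour, and recolouring both occurrences of a colour by a fresh one
does not change `c`. So an invariant is determined by its coefficients on colourings in which
every colour occurs exactly twice, and these depend only on the underlying perfect matching.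
There are no such colourings for odd `N`. For `N = 2r`, evaluating at one colouring per matching
gives functionals biorthogonal to the tensors of the matchings, whence spanning and independence.
-/

open Finset Function

namespace SoInvariants

theorem eq_span_range_of_biorthogonal {R V ι : Type*} [CommRing R] [AddCommGroup V] [Module R V]
    [Finite ι] [DecidableEq ι] {W : Submodule R V} {v : ι → V} (φ : ι → Module.Dual R V)
    (hv : ∀ i, v i ∈ W) (hφ : ∀ i j, φ i (v j) = if i = j then 1 else 0)
    (hW : ∀ w ∈ W, (∀ i, φ i w = 0) → w = 0) : W = Submodule.span R (Set.range v) := by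
  have := Fintype.ofFinite ι
  refine le_antisymm (fun w hw => ?_) (Submodule.span_le.2 (Set.range_subset_iff.2 hv))
  have hproj : w - ∑ i, φ i w • v i = 0 :=
    hW _ (W.sub_mem hw (W.sum_mem fun i _ => W.smul_mem _ (hv i))) fun i => by simp [hφ]
  rw [sub_eq_zero.1 hproj]
  exact Submodule.sum_mem _ fun i _ => Submodule.smul_mem _ _ (Submodule.subset_span ⟨i, rfl⟩)

theorem sum_sum_mul_eq_zero_of_skew {n R : Type*} [Fintype n] [CommRing R] [NoZeroDivisors R]
    [CharZero R] {A : Matrix n n R} (hA : Aᵀ = -A) {S : n → n → R} (hS : ∀ a b, S a b = S b a) :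
    ∑ a, ∑ b, A a b * S a b = 0 := by
  rw [← CharZero.eq_neg_self_iff]
  calc ∑ a, ∑ b, A a b * S a b = ∑ a, ∑ b, A b a * S b a := sum_comm
    _ = -∑ a, ∑ b, A a b * S a b := by
      simp only [← neg_mul, ← sum_neg_distrib, ← Matrix.neg_apply, ← hA, Matrix.transpose_apply, hS]

theorem sum_sum_update_eq_sum_sum {ι α R : Type*} [Fintype ι] [DecidableEq ι] [Fintype α]
    [DecidableEq α] [CommSemiring R] (A : α → α → R) (c : (ι → α) → R) (g : ι → α) :
    ∑ j, ∑ w, A (g j) w * c (update g j w) =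
      ∑ a, ∑ w, A a w * ∑ j, (if g j = a then c (update g j w) else 0) := by
  simp only [mul_sum, mul_ite, mul_zero]
  rw [sum_comm]
  symm
  rw [sum_comm]
  refine sum_congr rfl fun w _ => ?_
  rw [sum_comm]
  simp

theorem sum_ite_comp_eq_of_surjective {ι κ α R : Type*} [Fintype ι] [Fintype κ] [DecidableEq κ]
    [Fintype α] [DecidableEq α] [AddCommMonoidWithOne R] {p : ι → κ} (hp : Surjective p)
    (f : ι → α) :
    ∑ g : κ → α, (if g ∘ p = f then (1 : R) else 0) =
      if ∀ i j, p i = p j → f i = f j then 1 else 0 := by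
  split_ifs with h
  · have hg : (f ∘ surjInv hp) ∘ p = f := funext fun i => h _ _ (surjInv_eq hp (p i))
    rw [Fintype.sum_eq_single (f ∘ surjInv hp) fun g hg' =>
      if_neg fun e => hg' (hp.injective_comp_right (e.trans hg.symm)), if_pos hg]
  · exact sum_eq_zero fun g _ => if_neg fun e => h fun i j hij => by rw [← e]; simp [hij]

theorem exists_forall_ne_of_card_lt {ι α : Type*} [Fintype ι] [Fintype α]
    (h : Fintype.card ι < Fintype.card α) (f : ι → α) : ∃ b, ∀ i, f i ≠ b := by
  by_contra! hf
  exact h.not_ge (Fintype.card_le_of_surjective f hf)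

section Coloring

variable {ι α : Type*} [DecidableEq α]

def recolor (f : ι → α) (v w : α) : ι → α := fun i => if f i = v then w else f i

theorem recolor_eq_recolor_iff {f : ι → α} {v w : α} (hw : ∀ i, f i ≠ w) (i j : ι) :
    recolor f v w i = recolor f v w j ↔ f i = f j := by
  unfold recolor
  split_ifs with hi hj hj <;> grind

variable [Fintype ι]

def mult (f : ι → α) (u : α) : ℕ := #{i | f i = u}

def IsPairing (f : ι → α) : Prop := ∀ i, mult f (f i) = 2

def disagreement (f f' : ι → α) : Finset ι := {j | f j ≠ f' j}

@[simp]
theorem mem_disagreement {f f' : ι → α} {j : ι} : j ∈ disagreement f f' ↔ f j ≠ f' j := by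
  simp [disagreement]

theorem IsPairing.of_ker_eq {f g : ι → α} (hf : IsPairing f) (hker : ∀ i j, f i = f j ↔ g i = g j) :
    IsPairing g := fun i => by
  simpa only [mult, hker _ i] using hf i

theorem IsPairing.exists_equiv {f : ι → α} (hf : IsPairing f) :
    ∃ e : ι ≃ Set.range f × Fin 2, ∀ i, ((e i).1 : α) = f i := by
  have hfib (y : Set.range f) : Fintype.card {i // Set.rangeFactorization f i = y} = 2 := by
    obtain ⟨_, i, rfl⟩ := y
    rw [← hf i, mult, Fintype.card_subtype]
    simp [Set.rangeFactorization, Subtype.ext_iff]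
  exact ⟨(Equiv.sigmaFiberEquiv (Set.rangeFactorization f)).symm.trans
    ((Equiv.sigmaCongrRight fun y => Fintype.equivFinOfCardEq (hfib y)).trans
      (Equiv.sigmaEquivProd _ _)), fun i => rfl⟩

theorem IsPairing.card_eq {f : ι → α} (hf : IsPairing f) :
    Fintype.card ι = 2 * Fintype.card (Set.range f) := by
  obtain ⟨e, -⟩ := hf.exists_equiv
  rw [Fintype.card_congr e, Fintype.card_prod, Fintype.card_fin, mul_comm]

theorem disagreement_recolor_ssubset {f f' : ι → α} {j₀ : ι}
    (hker : ∀ i j, f i = f j ↔ f' i = f' j) (hw : ∀ i, f i ≠ f' j₀) :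
    disagreement (recolor f (f j₀) (f' j₀)) f' ⊂ disagreement f f' := by
  refine (ssubset_iff_of_subset fun j => ?_).2 ⟨j₀, by simpa using hw j₀, by simp [recolor]⟩
  simp only [mem_disagreement, recolor]
  split_ifs with hj
  · exact fun h => absurd ((hker j j₀).1 hj).symm h
  · exact id

variable [DecidableEq ι] {M : Type*} [AddCommMonoid M]

-- The coefficient form of invariance under `E_ab - E_ba ∈ so(m)`.
def IsSoInvariant (c : (ι → α) → M) : Prop :=
  ∀ (a b : α) (g : ι → α),
    ∑ j, (if g j = a then c (update g j b) else 0) = ∑ j, (if g j = b then c (update g j a) else 0)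

variable {c : (ι → α) → M}

-- The invariance relation for `(f j₀, b)` at `update f j₀ b`, whose other side is just `c f`.
theorem IsSoInvariant.apply_eq_sum (hc : IsSoInvariant c) {f : ι → α} {j₀ : ι} {b : α}
    (hb : ∀ i, f i ≠ b) :
    c f = ∑ j ∈ ({i | f i = f j₀} : Finset ι).erase j₀, c (update (update f j₀ b) j b) := by
  set g := update f j₀ b
  have hfilter : ({j | g j = f j₀} : Finset ι) = ({i | f i = f j₀} : Finset ι).erase j₀ := by
    ext j
    rcases eq_or_ne j j₀ with rfl | hj
    · simp [g, (hb j).symm]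
    · simp [g, hj]
  have hR : ∑ j, (if g j = b then c (update g j (f j₀)) else 0) = c f := by
    rw [Fintype.sum_eq_single j₀ fun j hj => if_neg (by simpa [g, hj] using hb j)]
    simp [g]
  rw [← hR, ← hc, ← sum_filter, hfilter]

theorem IsSoInvariant.apply_eq_zero_of_mult_eq_one (hc : IsSoInvariant c) {f : ι → α} {j₀ : ι}
    {b : α} (hb : ∀ i, f i ≠ b) (h : mult f (f j₀) = 1) : c f = 0 := by
  obtain ⟨k, hk⟩ := card_eq_one.1 h
  have : j₀ ∈ ({k} : Finset ι) := hk ▸ (by simp)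
  rw [hc.apply_eq_sum (j₀ := j₀) hb, hk, mem_singleton.1 this, erase_singleton, sum_empty]

theorem IsSoInvariant.apply_recolor (hc : IsSoInvariant c) {f : ι → α} {j₀ : ι} {w : α}
    (hw : ∀ i, f i ≠ w) (h : mult f (f j₀) = 2) : c (recolor f (f j₀) w) = c f := by
  have hj₀ : j₀ ∈ ({i | f i = f j₀} : Finset ι) := by simp
  obtain ⟨j₁, hj₁⟩ := card_eq_one.1 (by rw [card_erase_of_mem hj₀]; exact congrArg (· - 1) h :
    (({i | f i = f j₀} : Finset ι).erase j₀).card = 1)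
  have hfib (i : ι) : f i = f j₀ ↔ i = j₀ ∨ i = j₁ := by
    have := congrArg (i ∈ ·) hj₁
    simp only [mem_erase, mem_filter, mem_univ, true_and, mem_singleton, eq_iff_iff] at this
    tauto
  rw [hc.apply_eq_sum (j₀ := j₀) hw, hj₁, sum_singleton]
  congr 1
  funext i
  by_cases hi₁ : i = j₁
  · simp [recolor, hi₁, (hfib j₁).2 (Or.inr rfl)]
  · by_cases hi₀ : i = j₀
    · have : j₁ ≠ j₀ := (mem_erase.1 (hj₁ ▸ mem_singleton_self j₁)).1
      simp [recolor, hi₀, this.symm]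
    · simp [recolor, hi₀, hi₁, hfib]

theorem image_update_update {f : ι → α} {j₀ j : ι} {b : α} (hb : ∀ i, f i ≠ b)
    (hj : j ∈ ({i | f i = f j₀} : Finset ι).erase j₀) (h3 : 3 ≤ mult f (f j₀)) :
    univ.image (update (update f j₀ b) j b) = insert b (univ.image f) := by
  have hcard : 0 < ((({i | f i = f j₀} : Finset ι).erase j₀).erase j).card := by
    rw [card_erase_of_mem hj, card_erase_of_mem (by simp)]
    exact Nat.sub_pos_of_lt (Nat.lt_sub_of_add_lt h3)
  obtain ⟨k, hk⟩ := card_pos.1 hcard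
  simp only [mem_erase, mem_filter, mem_univ, true_and] at hk hj
  ext u
  simp only [mem_image, mem_univ, true_and, mem_insert]
  constructor
  · rintro ⟨i, rfl⟩
    by_cases hij : i = j
    · simp [hij]
    by_cases hij₀ : i = j₀
    · simp [hij₀, Ne.symm hj.1]
    · exact Or.inr ⟨i, by simp [hij, hij₀]⟩
  · rintro (rfl | ⟨i, rfl⟩)
    · exact ⟨j, by simp⟩
    by_cases hi : f i = f j₀
    · exact ⟨k, by simp [hk.1, hk.2.1, hk.2.2, hi]⟩
    · exact ⟨i, by rw [update_of_ne (by rintro rfl; exact hi hj.2),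
        update_of_ne (by rintro rfl; exact hi rfl)]⟩

variable [Fintype α]

-- Splitting off a colour uses up an unused colour: induct on the number of unused colours.
theorem IsSoInvariant.eq_zero_of_forall_isPairing (hc : IsSoInvariant c)
    (hcard : Fintype.card ι < Fintype.card α) (h0 : ∀ f, IsPairing f → c f = 0) (f : ι → α) :
    c f = 0 := by
  induction hn : Fintype.card α - #(univ.image f) using Nat.strong_induction_on generalizing f
    with | _ n ih =>
  obtain ⟨b, hb⟩ := exists_forall_ne_of_card_lt hcard f
  by_cases hf : IsPairing f
  · exact h0 f hf
  obtain ⟨j₀, hj₀⟩ := not_forall.1 hf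
  have hpos : 0 < mult f (f j₀) := card_pos.2 ⟨j₀, by simp⟩
  rcases (by omega : mult f (f j₀) = 1 ∨ 3 ≤ mult f (f j₀)) with h1 | h3
  · exact hc.apply_eq_zero_of_mult_eq_one hb h1
  rw [hc.apply_eq_sum hb]
  refine sum_eq_zero fun j hj => ih _ ?_ _ rfl
  have hle := card_le_univ (univ.image (update (update f j₀ b) j b))
  rw [image_update_update hb hj h3, card_insert_of_notMem (by simpa using hb)] at hle ⊢
  omega

theorem IsSoInvariant.exists_ker_eq_forall_ne (hc : IsSoInvariant c)
    (hcard : Fintype.card ι < Fintype.card α) {f f' : ι → α} (hf : IsPairing f)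
    (hker : ∀ i j, f i = f j ↔ f' i = f' j) {j₀ : ι} (hj₀ : f j₀ ≠ f' j₀) :
    ∃ f₁, IsPairing f₁ ∧ (∀ i j, f₁ i = f₁ j ↔ f' i = f' j) ∧ c f₁ = c f ∧
      disagreement f₁ f' ⊆ disagreement f f' ∧ ∀ i, f₁ i ≠ f' j₀ := by
  by_cases hw : ∃ j₁, f j₁ = f' j₀
  · obtain ⟨j₁, hj₁⟩ := hw
    obtain ⟨u, hu⟩ := exists_forall_ne_of_card_lt hcard f
    have hker₁ := recolor_eq_recolor_iff (v := f j₁) hu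
    refine ⟨_, hf.of_ker_eq fun i j => (hker₁ i j).symm, fun i j => (hker₁ i j).trans (hker i j),
      hc.apply_recolor hu (hf j₁), fun j => ?_, fun i => ?_⟩
    · simp only [mem_disagreement, recolor]
      split_ifs with hj
      · intro _ h
        have hcol : f j = f' j₀ := hj.trans hj₁
        exact hj₀ (((hker j₀ j).2 (hcol.symm.trans h)).trans hcol)
      · exact id
    · simp only [recolor]
      split_ifs with hi
      · exact fun h => hu j₁ (hj₁.trans h.symm)
      · exact hj₁ ▸ hi
  · exact ⟨f, hf, hker, rfl, subset_rfl, not_exists.1 hw⟩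

-- Recolour the pair of `j₀` by `f' j₀`, after moving any pair of colour `f' j₀` to a fresh
-- colour; the positions where `f` and `f'` disagree strictly decrease.
theorem IsSoInvariant.apply_eq_of_ker_eq (hc : IsSoInvariant c)
    (hcard : Fintype.card ι < Fintype.card α) {f f' : ι → α} (hf : IsPairing f)
    (hker : ∀ i j, f i = f j ↔ f' i = f' j) : c f = c f' := by
  induction hn : #(disagreement f f') using Nat.strong_induction_on generalizing f with | _ n ih =>
  by_cases hagree : ∀ j, f j = f' j
  · rw [funext hagree]
  obtain ⟨j₀, hj₀⟩ := not_forall.1 hagree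
  obtain ⟨f₁, hf₁, hker₁, hc₁, hsub, hw⟩ := hc.exists_ker_eq_forall_ne hcard hf hker hj₀
  have hker₂ := recolor_eq_recolor_iff (v := f₁ j₀) hw
  rw [← hc₁, ← hc.apply_recolor hw (hf₁ j₀)]
  exact ih _ (hn ▸ card_lt_card ((disagreement_recolor_ssubset hker₁ hw).trans_le hsub))
    (hf₁.of_ker_eq fun i j => (hker₂ i j).symm) (fun i j => (hker₂ i j).trans (hker₁ i j)) rfl

end Coloring

section Involution

variable {ι α : Type*} {π : ι → ι}

theorem forall_apply_comp_eq_iff {f : ι → α} {π' : ι → ι} (hfix' : ∀ j, π' j ≠ j)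
    (hker : ∀ i j, f i = f j ↔ i = j ∨ i = π j) : (∀ j, f (π' j) = f j) ↔ π' = π := by
  simp only [hker, funext_iff]
  exact forall_congr' fun j => or_iff_right (hfix' j)

variable [DecidableEq ι]

theorem forall_update_comp_eq_iff (hπ : Involutive π) (hfix : ∀ j, π j ≠ j) {g : ι → α} {j : ι}
    {b : α} : (∀ i, update g j b (π i) = update g j b i) ↔
      g (π j) = b ∧ ∀ i, i ≠ j → i ≠ π j → g (π i) = g i := by
  constructor
  · intro h
    refine ⟨by simpa [update_of_ne (hfix j)] using h j, fun i hij hiπ => ?_⟩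
    have hπi : π i ≠ j := fun e => hiπ (by rw [← e, hπ])
    simpa [update_of_ne hij, update_of_ne hπi] using h i
  · rintro ⟨hj, hg⟩ i
    by_cases hij : i = j
    · subst hij
      simp [update_of_ne (hfix i), hj]
    by_cases hiπ : i = π j
    · subst hiπ
      simp [hπ j, update_of_ne (hfix j), hj]
    have hπi : π i ≠ j := fun e => hiπ (by rw [← e, hπ])
    simp [update_of_ne hij, update_of_ne hπi, hg i hij hiπ]

variable [Fintype ι] [DecidableEq α]

theorem isPairing_of_ker_eq {f : ι → α} (hfix : ∀ j, π j ≠ j)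
    (hker : ∀ i j, f i = f j ↔ i = j ∨ i = π j) : IsPairing f := fun i => by
  have : ({j | f j = f i} : Finset ι) = {i, π i} := by
    ext j
    simp [hker]
  rw [mult, this, card_pair (hfix i).symm]

-- The `j`-th term on one side of the relation equals the `π j`-th term on the other.
theorem isSoInvariant_indicator {M : Type*} [AddCommMonoid M] [One M] (hπ : Involutive π)
    (hfix : ∀ j, π j ≠ j) :
    IsSoInvariant fun f : ι → α => if ∀ i, f (π i) = f i then (1 : M) else 0 := by
  intro a b g
  conv_rhs => rw [← Equiv.sum_comp (hπ.toPerm π)]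
  refine Fintype.sum_congr _ _ fun j => ?_
  rw [← ite_and, ← ite_and]
  refine if_congr ?_ rfl rfl
  simp only [Involutive.coe_toPerm, forall_update_comp_eq_iff hπ hfix, hπ j]
  constructor <;> rintro ⟨h₁, h₂, h₃⟩ <;> exact ⟨h₂, h₁, fun i hi hi' => h₃ i hi' hi⟩

end Involution

section Matching

variable {r : ℕ}

def pairSwap (p : Fin (2 * r)) : Fin (2 * r) := ⟨2 * (p / 2) + (1 - p % 2), by omega⟩

theorem pairSwap_involutive : Involutive (pairSwap (r := r)) := fun p => by
  ext
  simp only [pairSwap]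
  omega

theorem pairSwap_ne (p : Fin (2 * r)) : pairSwap p ≠ p := by
  simp only [pairSwap, ne_eq, Fin.ext_iff]
  omega

theorem div_two_eq_div_two_iff {p q : Fin (2 * r)} : (q : ℕ) / 2 = p / 2 ↔ q = p ∨ q = pairSwap p := by
  simp only [pairSwap, Fin.ext_iff]
  omega

-- `σ` carries the standard pairs `{2k, 2k+1}` onto the pairs `{j, partner σ j}` of a perfect
-- matching, and `block σ j` is the index `k` of the pair of `j`, as in `matchTensor`.
def block (σ : Equiv.Perm (Fin (2 * r))) (j : Fin (2 * r)) : Fin r :=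
  ⟨(σ.symm j : ℕ) / 2, by have := (σ.symm j).isLt; omega⟩

def partner (σ : Equiv.Perm (Fin (2 * r))) (j : Fin (2 * r)) : Fin (2 * r) := σ (pairSwap (σ.symm j))

theorem partner_involutive (σ : Equiv.Perm (Fin (2 * r))) : Involutive (partner σ) := fun j => by
  simp [partner, pairSwap_involutive _]

theorem partner_ne (σ : Equiv.Perm (Fin (2 * r))) (j : Fin (2 * r)) : partner σ j ≠ j := fun h =>
  pairSwap_ne (σ.symm j) (σ.symm.injective (by simpa [partner] using congrArg σ.symm h))

theorem block_eq_block_iff (σ : Equiv.Perm (Fin (2 * r))) (i j : Fin (2 * r)) :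
    block σ i = block σ j ↔ i = j ∨ i = partner σ j := by
  simp only [block, Fin.ext_iff, div_two_eq_div_two_iff, partner, σ.symm.injective.eq_iff,
    Equiv.symm_apply_eq]

theorem IsPairing.exists_perm {α : Type*} [DecidableEq α] {f : Fin (2 * r) → α}
    (hf : IsPairing f) :
    ∃ σ : Equiv.Perm (Fin (2 * r)), ∀ i j, f i = f j ↔ i = j ∨ i = partner σ j := by
  obtain ⟨e, he⟩ := hf.exists_equiv
  have hcard : Fintype.card (Set.range f) = r := by
    have := hf.card_eq
    rw [Fintype.card_fin] at this
    omega
  set eR := Fintype.equivFinOfCardEq hcard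
  let τ : Fin (2 * r) ≃ Fin (2 * r) := e.trans ((eR.prodCongr (Equiv.refl _)).trans
    (finProdFinEquiv.trans (finCongr (mul_comm r 2))))
  have hblock (i : Fin (2 * r)) : block τ.symm i = eR (e i).1 := by
    ext
    simp only [block, Equiv.symm_symm, τ, Equiv.trans_apply, Equiv.prodCongr_apply, Prod.map,
      finCongr_apply, Fin.val_cast, finProdFinEquiv_apply_val]
    omega
  refine ⟨τ.symm, fun i j => ?_⟩
  rw [← block_eq_block_iff, hblock, hblock, eR.injective.eq_iff, Subtype.ext_iff, he, he]

theorem forall_block_eq_imp_iff {α : Type*} (σ : Equiv.Perm (Fin (2 * r))) (f : Fin (2 * r) → α) :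
    (∀ i j, block σ i = block σ j → f i = f j) ↔ ∀ j, f (partner σ j) = f j := by
  refine ⟨fun h j => h _ _ ((block_eq_block_iff σ _ _).2 (Or.inr rfl)), fun h i j hij => ?_⟩
  rcases (block_eq_block_iff σ i j).1 hij with rfl | rfl
  exacts [rfl, h j]

end Matching

section Tensor

variable {m N : ℕ}

def tensorBasis (m N : ℕ) : Module.Basis (Fin N → Fin m) ℂ (Tens m N) :=
  Basis.piTensorProduct fun _ => Pi.basisFun ℂ (Fin m)

theorem tensorBasis_repr_rho (A : Matrix (Fin m) (Fin m) ℂ) (T : Tens m N) (g : Fin N → Fin m) :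
    (tensorBasis m N).repr (rho A T) g =
      ∑ j, ∑ w, A (g j) w * (tensorBasis m N).repr T (update g j w) := by
  suffices (tensorBasis m N).coord g ∘ₗ rho A =
      ∑ j, ∑ w, A (g j) w • (tensorBasis m N).coord (update g j w) by
    simpa using LinearMap.congr_fun this T
  refine PiTensorProduct.ext (MultilinearMap.ext fun x => ?_)
  simp only [tensorBasis, rho, LinearMap.compMultilinearMap_apply, LinearMap.coe_comp,
    LinearMap.coe_sum, Function.comp_apply, Finset.sum_apply, PiTensorProduct.map_tprod, map_sum,
    Module.Basis.coord_apply, Basis.piTensorProduct_repr_tprod_apply, Pi.basisFun_repr,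
    LinearMap.coe_smul, Pi.smul_apply, smul_eq_mul]
  refine Fintype.sum_congr _ _ fun j => ?_
  simp only [apply_update (fun i (φ : Vm m →ₗ[ℂ] Vm m) => φ (x i) (g i)),
    apply_update (fun i (k : Fin m) => x i k), prod_update_of_mem (mem_univ j)]
  simp only [Matrix.mulVecLin_apply, Matrix.mulVec, dotProduct, LinearMap.id_apply, sum_mul,
    mul_assoc]

theorem mem_invSub_iff (T : Tens m N) :
    T ∈ InvSub m N ↔ IsSoInvariant ⇑((tensorBasis m N).repr T) := by
  set c := ⇑((tensorBasis m N).repr T)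
  have hrho (A : Matrix (Fin m) (Fin m) ℂ) :
      rho A T = 0 ↔ ∀ g, ∑ j, ∑ w, A (g j) w * c (update g j w) = 0 := by
    simp only [← (tensorBasis m N).forall_coord_eq_zero_iff, Module.Basis.coord_apply,
      tensorBasis_repr_rho, c]
  simp only [InvSub, Submodule.mem_iInf, LinearMap.mem_ker, hrho]
  constructor
  · intro h a b g
    have hskew : (Matrix.single a b (1 : ℂ) - Matrix.single b a 1)ᵀ =
        -(Matrix.single a b 1 - Matrix.single b a 1) := by
      simp [Matrix.transpose_sub, Matrix.transpose_single]
    refine sub_eq_zero.1 (((sum_sub_distrib _ _).symm).trans (Eq.trans ?_ (h _ hskew g)))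
    refine Fintype.sum_congr _ _ fun j => ?_
    simp [Matrix.single_apply, sub_mul, sum_sub_distrib, ite_and, eq_comm]
  · intro hc A hA g
    refine (sum_sum_update_eq_sum_sum A c g).trans ?_
    exact sum_sum_mul_eq_zero_of_skew hA fun a b => hc a b g

variable {r : ℕ}

theorem block_surjective (σ : Equiv.Perm (Fin (2 * r))) : Surjective (block σ) := fun k =>
  ⟨σ ⟨2 * k, by omega⟩, by ext; simp [block]⟩

theorem tensorBasis_repr_matchTensor (σ : Equiv.Perm (Fin (2 * r))) (f : Fin (2 * r) → Fin m) :
    (tensorBasis m (2 * r)).repr (matchTensor m r σ) f =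
      if ∀ j, f (partner σ j) = f j then 1 else 0 := by
  have hsum : matchTensor m r σ = ∑ g : Fin r → Fin m, tensorBasis m (2 * r) (g ∘ block σ) := by
    simp [matchTensor, tensorBasis, Basis.piTensorProduct_apply, block]
  simp only [hsum, map_sum, Module.Basis.repr_self, Finsupp.finsetSum_apply, Finsupp.single_apply,
    sum_ite_comp_eq_of_surjective (block_surjective σ), forall_block_eq_imp_iff]

theorem matchTensor_mem_invSub (σ : Equiv.Perm (Fin (2 * r))) :
    matchTensor m r σ ∈ InvSub m (2 * r) := by
  rw [mem_invSub_iff, funext (tensorBasis_repr_matchTensor σ)]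
  convert isSoInvariant_indicator (α := Fin m) (M := ℂ) (partner_involutive σ) (partner_ne σ)

theorem eq_zero_of_mem_invSub (hNm : N < m) {T : Tens m N} (hT : T ∈ InvSub m N)
    (h0 : ∀ f, IsPairing f → (tensorBasis m N).repr T f = 0) : T = 0 :=
  (tensorBasis m N).forall_coord_eq_zero_iff.1 fun f =>
    ((mem_invSub_iff T).1 hT).eq_zero_of_forall_isPairing (by simpa using hNm) h0 f

theorem invSub_eq_bot_of_odd (hNm : N < m) (hN : Odd N) : InvSub m N = ⊥ :=
  eq_bot_iff.2 fun T hT => eq_zero_of_mem_invSub hNm hT fun f hf =>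
    absurd ⟨_, by simpa [two_mul] using hf.card_eq⟩ (Nat.not_even_iff_odd.2 hN)

def blockColoring (h : r ≤ m) (σ : Equiv.Perm (Fin (2 * r))) (j : Fin (2 * r)) : Fin m :=
  Fin.castLE h (block σ j)

theorem blockColoring_eq_iff (h : r ≤ m) (σ : Equiv.Perm (Fin (2 * r))) (i j : Fin (2 * r)) :
    blockColoring h σ i = blockColoring h σ j ↔ i = j ∨ i = partner σ j := by
  rw [blockColoring, blockColoring, Fin.castLE_inj, block_eq_block_iff]

theorem tensorBasis_repr_matchTensor_blockColoring (h : r ≤ m) (σ σ' : Equiv.Perm (Fin (2 * r))) :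
    (tensorBasis m (2 * r)).repr (matchTensor m r σ') (blockColoring h σ) =
      if partner σ' = partner σ then 1 else 0 := by
  simp only [tensorBasis_repr_matchTensor, forall_apply_comp_eq_iff (partner_ne σ')
    (blockColoring_eq_iff h σ)]

theorem matchTensor_eq_matchTensor_iff (h : r ≤ m) {σ σ' : Equiv.Perm (Fin (2 * r))} :
    matchTensor m r σ = matchTensor m r σ' ↔ partner σ = partner σ' := by
  refine ⟨fun e => ?_, fun e => (tensorBasis m (2 * r)).ext_elem fun f => by
    rw [tensorBasis_repr_matchTensor, tensorBasis_repr_matchTensor, e]⟩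
  have := congrArg (fun T => (tensorBasis m (2 * r)).repr T (blockColoring h σ')) e
  simpa [tensorBasis_repr_matchTensor_blockColoring] using this

theorem IsSoInvariant.apply_eq_apply_blockColoring {c : (Fin (2 * r) → Fin m) → ℂ}
    (hc : IsSoInvariant c) (hrm : 2 * r < m) {f : Fin (2 * r) → Fin m} {σ : Equiv.Perm (Fin (2 * r))}
    (hker : ∀ i j, f i = f j ↔ i = j ∨ i = partner σ j) :
    c f = c (blockColoring (by omega) σ) :=
  hc.apply_eq_of_ker_eq (by simpa using hrm) (isPairing_of_ker_eq (partner_ne σ) hker)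
    fun i j => by rw [hker, blockColoring_eq_iff]

theorem eq_zero_of_mem_invSub_of_forall_partner {r : ℕ} (hrm : 2 * r < m)
    {T : Tens m (2 * r)} (hT : T ∈ InvSub m (2 * r))
    (h0 : ∀ σ, ∃ σ', partner σ' = partner σ ∧
      (tensorBasis m (2 * r)).repr T (blockColoring (by omega) σ') = 0) : T = 0 :=
  eq_zero_of_mem_invSub hrm hT fun f hf => by
    obtain ⟨σ, hσ⟩ := hf.exists_perm
    obtain ⟨σ', hσ', hT0⟩ := h0 σ
    rwa [((mem_invSub_iff T).1 hT).apply_eq_apply_blockColoring hrm (hσ' ▸ hσ)]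

end Tensor

end SoInvariants

open SoInvariants in
/-- First and second fundamental theorems of invariant theory for `so(m)` acting on
`V^{⊗N}` in the stable range `N < m`: there are no invariants if `N` is odd, and if
`N = 2r` the invariants are spanned by the permutations of `ω^{⊗r}`; moreover these
spanning tensors are linearly independent (as a set) when `m ≥ N`. -/
theorem stmt14 (m N : ℕ) (hNm : N < m) :
    (Odd N → InvSub m N = ⊥) ∧
    (∀ r : ℕ, N = 2 * r →
      InvSub m (2 * r) =
        Submodule.span ℂ {x : Tens m (2 * r) |
          ∃ σ : Equiv.Perm (Fin (2 * r)), x = matchTensor m r σ} ∧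
      LinearIndependent ℂ
        (fun x : {x : Tens m (2 * r) // ∃ σ : Equiv.Perm (Fin (2 * r)),
            x = matchTensor m r σ} => (x : Tens m (2 * r)))) := by
  classical
  refine ⟨invSub_eq_bot_of_odd hNm, fun r hr => ?_⟩
  subst hr
  set S := {x : Tens m (2 * r) | ∃ σ : Equiv.Perm (Fin (2 * r)), x = matchTensor m r σ}
  have hrm : r ≤ m := by omega
  have : Finite S := ((Set.finite_range (matchTensor m r)).subset
    (by rintro _ ⟨σ, rfl⟩; exact ⟨σ, rfl⟩)).to_subtype
  let φ (x : S) : Module.Dual ℂ (Tens m (2 * r)) :=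
    (tensorBasis m (2 * r)).coord (blockColoring hrm x.2.choose)
  have hφ (x y : S) : φ x y = if x = y then 1 else 0 := by
    rw [Module.Basis.coord_apply, y.2.choose_spec, tensorBasis_repr_matchTensor_blockColoring]
    simp only [← matchTensor_eq_matchTensor_iff hrm, ← x.2.choose_spec, ← y.2.choose_spec,
      Subtype.ext_iff, eq_comm]
  refine ⟨?_, LinearIndependent.of_pairwise_dual_eq_zero_one _ φ
    (fun x y hxy => by simp [hφ, hxy]) fun x => by simp [hφ]⟩
  rw [← Subtype.range_coe (s := S)]
  refine eq_span_range_of_biorthogonal φ (fun x => x.2.choose_spec ▸ matchTensor_mem_invSub _) hφ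
    fun T hT h0 => eq_zero_of_mem_invSub_of_forall_partner hNm hT fun σ => ?_
  let x : S := ⟨matchTensor m r σ, σ, rfl⟩
  exact ⟨x.2.choose, (matchTensor_eq_matchTensor_iff hrm).1 x.2.choose_spec.symm, h0 x⟩
end
end

section
/- Let V be a finite-dimensional vector space with nondegenerate symmetric bilinear form, and m ≥ 0 such that dim V large relative to N. Then for any subrepresentations 0 ≠ τ_1 ⊊ τ_2 ⊆ V^{⊗N} of so(V) (or osp in the graded case), the inclusion τ_1 ↪ τ_2 splits, provided V^{⊗2N} is a completely reducible so(V)-module. In particular, complete reducibility of V^{⊗2N} implies splitting of all inclusions of subrepresentations of V^{⊗N}. -/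
open scoped TensorProduct

noncomputable section

/-- The diagonal (derivation) action of an endomorphism on `V^{⊗N}`. -/
def rho2 {V : Type*} [AddCommGroup V] [Module ℂ V] {N : ℕ} (f : Module.End ℂ V) :
    (⨂[ℂ] _i : Fin N, V) →ₗ[ℂ] ⨂[ℂ] _i : Fin N, V :=
  ∑ j : Fin N, PiTensorProduct.map
    (Function.update (fun _ : Fin N => (LinearMap.id : V →ₗ[ℂ] V)) j f)

/-- Skew-adjointness w.r.t. a bilinear form: membership in `so(V)`. -/
def IsSkew {V : Type*} [AddCommGroup V] [Module ℂ V]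
    (B : V →ₗ[ℂ] V →ₗ[ℂ] ℂ) (f : Module.End ℂ V) : Prop :=
  ∀ v w, B (f v) w = -B v (f w)

/-- A submodule of `V^{⊗N}` is a subrepresentation iff it is invariant under the diagonal
action of `so(V)`. -/
def IsInvt {V : Type*} [AddCommGroup V] [Module ℂ V]
    (B : V →ₗ[ℂ] V →ₗ[ℂ] ℂ) {N : ℕ}
    (τ : Submodule ℂ (⨂[ℂ] _i : Fin N, V)) : Prop :=
  ∀ f : Module.End ℂ V, IsSkew B f → ∀ x ∈ τ, rho2 f x ∈ τ

/-!
Through the form, `V^{⊗2N} ≅ (V^{⊗N})* ⊗ V^{⊗N} ≅ End(V^{⊗N})` as `so(V)`-modules, with `so(V)`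
acting on endomorphisms by commutators. The endomorphisms mapping `τ₂` into `τ₁` and killing `τ₁`
form a subrepresentation `F`; let `C` be an invariant complement. Decompose any linear projection
onto `τ₁` as `φ + ψ` with `φ ∈ F` and `ψ ∈ C`. Then `ψ` is still a projection of `τ₂` onto `τ₁`,
so for `x ∈ so(V)` the commutator `[x, ψ]` lies in `F` as well as in `C`, hence vanishes.
-/

section FlagMaps

variable {R W : Type*} [CommRing R] [AddCommGroup W] [Module R W]

def flagMaps (τ₁ τ₂ : Submodule R W) : Submodule R (Module.End R W) :=
  Submodule.compatibleMaps τ₂ τ₁ ⊓ Submodule.compatibleMaps τ₁ ⊥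

variable {τ₁ τ₂ : Submodule R W}

lemma mem_flagMaps {φ : Module.End R W} :
    φ ∈ flagMaps τ₁ τ₂ ↔ (∀ x ∈ τ₂, φ x ∈ τ₁) ∧ ∀ x ∈ τ₁, φ x = 0 := by
  simp [flagMaps, Submodule.compatibleMaps, SetLike.le_def]

lemma commutator_mem_flagMaps {s φ : Module.End R W}
    (hs₁ : ∀ x ∈ τ₁, s x ∈ τ₁) (hs₂ : ∀ x ∈ τ₂, s x ∈ τ₂)
    (hφ₂ : ∀ x ∈ τ₂, φ x ∈ τ₁) (hφ₁ : ∀ x ∈ τ₁, φ (s x) = s (φ x)) :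
    s ∘ₗ φ - φ ∘ₗ s ∈ flagMaps τ₁ τ₂ :=
  mem_flagMaps.2 ⟨fun x hx => τ₁.sub_mem (hs₁ _ (hφ₂ x hx)) (hφ₂ _ (hs₂ x hx)),
    fun x hx => by simp [hφ₁ x hx]⟩

lemma commutator_mem_flagMaps_of_mem {s φ : Module.End R W}
    (hs₁ : ∀ x ∈ τ₁, s x ∈ τ₁) (hs₂ : ∀ x ∈ τ₂, s x ∈ τ₂) (hφ : φ ∈ flagMaps τ₁ τ₂) :
    s ∘ₗ φ - φ ∘ₗ s ∈ flagMaps τ₁ τ₂ := by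
  rw [mem_flagMaps] at hφ
  exact commutator_mem_flagMaps hs₁ hs₂ hφ.1 fun x hx => by
    rw [hφ.2 _ (hs₁ x hx), hφ.2 x hx, map_zero]

end FlagMaps

theorem exists_commuting_projection_of_isCompl {K W : Type*} [Field K] [AddCommGroup W]
    [Module K W] {τ₁ τ₂ : Submodule K W} {S : Set (Module.End K W)}
    (hτ₁ : ∀ s ∈ S, ∀ x ∈ τ₁, s x ∈ τ₁) (hτ₂ : ∀ s ∈ S, ∀ x ∈ τ₂, s x ∈ τ₂)
    {C : Submodule K (Module.End K W)} (hC : ∀ s ∈ S, ∀ φ ∈ C, s ∘ₗ φ - φ ∘ₗ s ∈ C)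
    (hcompl : IsCompl (flagMaps τ₁ τ₂) C) :
    ∃ ψ : Module.End K W, (∀ x ∈ τ₂, ψ x ∈ τ₁) ∧ (∀ x ∈ τ₁, ψ x = x) ∧
      ∀ s ∈ S, s ∘ₗ ψ = ψ ∘ₗ s := by
  obtain ⟨p, hp⟩ := τ₁.subtype.exists_leftInverse_of_injective τ₁.ker_subtype
  have hp₁ : ∀ x (hx : x ∈ τ₁), p x = ⟨x, hx⟩ := fun x hx => LinearMap.congr_fun hp ⟨x, hx⟩
  obtain ⟨φ, hφ, ψ, hψ, hφψ⟩ := Submodule.mem_sup.1 (hcompl.sup_eq_top ▸ Submodule.mem_top :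
    τ₁.subtype ∘ₗ p ∈ flagMaps τ₁ τ₂ ⊔ C)
  rw [mem_flagMaps] at hφ
  have hψ_eq : ψ = τ₁.subtype ∘ₗ p - φ := eq_sub_of_add_eq' hφψ
  have hψ₂ : ∀ x ∈ τ₂, ψ x ∈ τ₁ := fun x hx => by
    rw [hψ_eq]
    exact τ₁.sub_mem (p x).2 (hφ.1 x hx)
  have hψ₁ : ∀ x ∈ τ₁, ψ x = x := fun x hx => by
    simp [hψ_eq, hp₁ x hx, hφ.2 x hx]
  refine ⟨ψ, hψ₂, hψ₁, fun s hs => sub_eq_zero.1 ?_⟩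
  refine Submodule.disjoint_def.1 hcompl.disjoint _ ?_ (hC s hs ψ hψ)
  exact commutator_mem_flagMaps (hτ₁ s hs) (hτ₂ s hs) hψ₂ fun x hx => by
    rw [hψ₁ _ (hτ₁ s hs x hx), hψ₁ x hx]

lemma Submodule.isCompl_map_of_isCompl_comap {R M M' : Type*} [Ring R] [AddCommGroup M]
    [Module R M] [AddCommGroup M'] [Module R M'] (e : M ≃ₗ[R] M') {A : Submodule R M'}
    {C : Submodule R M} (h : IsCompl (A.comap e.toLinearMap) C) :
    IsCompl A (C.map e.toLinearMap) := by
  simpa [Submodule.map_comap_eq_of_surjective e.surjective] using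
    (Submodule.orderIsoMapComap e).isCompl h

lemma Finset.prod_apply_update {ι M R : Type*} [Fintype ι] [DecidableEq ι] [CommMonoid R]
    (g : ι → M → R) (v : ι → M) (j : ι) (x : M) :
    ∏ i, g i (Function.update v j x i) = g j x * ∏ i ∈ univ.erase j, g i (v i) := by
  simp [Function.apply_update g, Finset.prod_update_of_mem, Finset.sdiff_singleton_eq_erase]

section TensorPower

open PiTensorProduct

variable {V : Type*} [AddCommGroup V] [Module ℂ V]

lemma rho2_tprod {N : ℕ} (f : Module.End ℂ V) (v : Fin N → V) :
    rho2 f (tprod ℂ v) = ∑ j, tprod ℂ (Function.update v j (f (v j))) := by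
  simp only [rho2, LinearMap.sum_apply, map_tprod]
  refine Finset.sum_congr rfl fun j _ => congrArg _ (funext fun i => ?_)
  rcases eq_or_ne i j with rfl | h
  · simp
  · simp [Function.update_of_ne h]

def finSumFinEquivTwoMul (n : ℕ) : Fin n ⊕ Fin n ≃ Fin (2 * n) :=
  finSumFinEquiv.trans (finCongr (two_mul n).symm)

variable (V) in
def tensorPowerSplit (n : ℕ) :
    (⨂[ℂ] _i : Fin (2 * n), V) ≃ₗ[ℂ] (⨂[ℂ] _i : Fin n, V) ⊗[ℂ] (⨂[ℂ] _i : Fin n, V) :=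
  (reindex ℂ (fun _ => V) (finSumFinEquivTwoMul n).symm).trans (tmulEquiv ℂ V).symm

lemma tensorPowerSplit_tprod {n : ℕ} (v : Fin (2 * n) → V) :
    tensorPowerSplit V n (tprod ℂ v) =
      tprod ℂ (v ∘ finSumFinEquivTwoMul n ∘ Sum.inl) ⊗ₜ
        tprod ℂ (v ∘ finSumFinEquivTwoMul n ∘ Sum.inr) := by
  simp only [tensorPowerSplit, LinearEquiv.trans_apply, reindex_tprod, Equiv.symm_symm,
    tmulEquiv_symm_apply]
  rfl

lemma tensorPowerSplit_rho2 {n : ℕ} (f : Module.End ℂ V) (t : ⨂[ℂ] _i : Fin (2 * n), V) :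
    tensorPowerSplit V n (rho2 f t) =
      (rho2 f).rTensor _ (tensorPowerSplit V n t) + (rho2 f).lTensor _ (tensorPowerSplit V n t) := by
  classical
  induction t using PiTensorProduct.induction_on with
  | add x y hx hy =>
    simp only [map_add, hx, hy]
    abel
  | smul_tprod r v =>
    simp only [map_smul, rho2_tprod, map_sum, tensorPowerSplit_tprod, LinearMap.rTensor_tmul,
      LinearMap.lTensor_tmul, TensorProduct.sum_tmul, TensorProduct.tmul_sum, ← smul_add]
    set e := finSumFinEquivTwoMul n
    have hL : ∀ i x, Function.update v (e (.inl i)) x ∘ e ∘ Sum.inl =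
        Function.update (v ∘ e ∘ Sum.inl) i x :=
      Function.update_comp_eq_of_injective v (e.injective.comp Sum.inl_injective)
    have hR : ∀ i x, Function.update v (e (.inr i)) x ∘ e ∘ Sum.inr =
        Function.update (v ∘ e ∘ Sum.inr) i x :=
      Function.update_comp_eq_of_injective v (e.injective.comp Sum.inr_injective)
    have hLR : ∀ i x, Function.update v (e (.inl i)) x ∘ e ∘ Sum.inr = v ∘ e ∘ Sum.inr :=
      fun i x => Function.update_comp_eq_of_forall_ne v x fun j h => Sum.inr_ne_inl (e.injective h)
    have hRL : ∀ i x, Function.update v (e (.inr i)) x ∘ e ∘ Sum.inl = v ∘ e ∘ Sum.inl :=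
      fun i x => Function.update_comp_eq_of_forall_ne v x fun j h => Sum.inl_ne_inr (e.injective h)
    rw [← e.sum_comp, Fintype.sum_sum_type]
    simp only [hL, hR, hLR, hRL, Function.comp_apply]

variable [FiniteDimensional ℂ V] (B : V →ₗ[ℂ] V →ₗ[ℂ] ℂ) (hB : LinearMap.BilinForm.Nondegenerate B)

def tensorPowerDual (n : ℕ) :
    (⨂[ℂ] _i : Fin n, V) ≃ₗ[ℂ] Module.Dual ℂ (⨂[ℂ] _i : Fin n, V) :=
  (congr fun _ => LinearMap.BilinForm.toDual B hB).trans dualDistribEquiv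

lemma tensorPowerDual_tprod {n : ℕ} (v w : Fin n → V) :
    tensorPowerDual B hB n (tprod ℂ v) (tprod ℂ w) = ∏ i, B (v i) (w i) := by
  simp only [tensorPowerDual, dualDistribEquiv, LinearEquiv.trans_apply, congr_tprod,
    dualDistribEquivOfBasis_apply_apply, piTensorHomMap_tprod_tprod,
    LinearMap.BilinForm.toDual_def, constantBaseRingEquiv_tprod]
  -- the two products differ only in their `Fintype (Fin n)` instance
  convert rfl

lemma tensorPowerDual_rho2 {n : ℕ} {f : Module.End ℂ V} (hf : IsSkew B f)
    (x : ⨂[ℂ] _i : Fin n, V) :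
    tensorPowerDual B hB n (rho2 f x) = -(tensorPowerDual B hB n x ∘ₗ rho2 f) := by
  classical
  suffices (tensorPowerDual B hB n).toLinearMap ∘ₗ rho2 f
      = -(LinearMap.lcomp ℂ ℂ (rho2 f) ∘ₗ (tensorPowerDual B hB n).toLinearMap) from
    LinearMap.congr_fun this x
  ext v w
  simp only [LinearMap.compMultilinearMap_apply, LinearMap.comp_apply, LinearMap.neg_apply,
    LinearMap.lcomp_apply, LinearEquiv.coe_coe, rho2_tprod, map_sum, LinearMap.sum_apply,
    tensorPowerDual_tprod, ← Finset.sum_neg_distrib]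
  refine Finset.sum_congr rfl fun j _ => ?_
  rw [Finset.prod_apply_update (fun i u => B u (w i)),
    Finset.prod_apply_update (fun i u => B (v i) u), hf, neg_mul]

def tensorPowerEquivEnd (n : ℕ) :
    (⨂[ℂ] _i : Fin (2 * n), V) ≃ₗ[ℂ] Module.End ℂ (⨂[ℂ] _i : Fin n, V) :=
  (tensorPowerSplit V n).trans
    ((TensorProduct.congr (tensorPowerDual B hB n) (LinearEquiv.refl ℂ _)).trans
      (dualTensorHomEquiv ℂ _ _))

lemma tensorPowerEquivEnd_rho2 {n : ℕ} {f : Module.End ℂ V} (hf : IsSkew B f)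
    (t : ⨂[ℂ] _i : Fin (2 * n), V) :
    tensorPowerEquivEnd B hB n (rho2 f t) =
      rho2 f ∘ₗ tensorPowerEquivEnd B hB n t - tensorPowerEquivEnd B hB n t ∘ₗ rho2 f := by
  simp only [tensorPowerEquivEnd, LinearEquiv.trans_apply, tensorPowerSplit_rho2]
  induction tensorPowerSplit V n t using TensorProduct.induction_on with
  | zero => simp
  | add x y hx hy =>
    simp only [map_add, LinearMap.comp_add, LinearMap.add_comp] at hx hy ⊢
    linear_combination (norm := module) hx + hy
  | tmul a b =>
    refine LinearMap.ext fun x => ?_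
    simp only [dualTensorHomEquiv, LinearMap.rTensor_tmul, LinearMap.lTensor_tmul, map_add,
      TensorProduct.congr_tmul, tensorPowerDual_rho2 B hB hf, LinearEquiv.refl_apply,
      LinearEquiv.ofBijective_apply, LinearMap.add_apply, dualTensorHom_apply,
      LinearMap.neg_apply, LinearMap.coe_comp, Function.comp_apply, neg_smul,
      LinearMap.sub_apply, map_smul]
    abel

end TensorPower

theorem stmt15_general {V : Type*} [AddCommGroup V] [Module ℂ V] [FiniteDimensional ℂ V]
    (B : V →ₗ[ℂ] V →ₗ[ℂ] ℂ)
    (hnondeg : ∀ v, (∀ w, B v w = 0) → v = 0) (N : ℕ)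
    (hcr : ∀ S : Submodule ℂ (⨂[ℂ] _i : Fin (2 * N), V), IsInvt B S →
      ∃ S' : Submodule ℂ (⨂[ℂ] _i : Fin (2 * N), V),
        IsInvt B S' ∧ S ⊓ S' = ⊥ ∧ S ⊔ S' = ⊤)
    (τ1 τ2 : Submodule ℂ (⨂[ℂ] _i : Fin N, V))
    (h1 : IsInvt B τ1) (h2 : IsInvt B τ2)
    (h12 : τ1 ≤ τ2) :
    ∃ π : τ2 →ₗ[ℂ] (⨂[ℂ] _i : Fin N, V),
      LinearMap.range π ≤ τ1 ∧
      (∀ (x : ⨂[ℂ] _i : Fin N, V) (hx : x ∈ τ1), π ⟨x, h12 hx⟩ = x) ∧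
      (∀ (f : Module.End ℂ V) (hf : IsSkew B f) (x : τ2),
        π ⟨rho2 f x.1, h2 f hf x.1 x.2⟩ = rho2 f (π x)) := by
  have hB : LinearMap.BilinForm.Nondegenerate B := .ofSeparatingLeft hnondeg
  let e := tensorPowerEquivEnd B hB N
  obtain ⟨C, hC, hinf, hsup⟩ := hcr ((flagMaps τ1 τ2).comap e.toLinearMap) fun f hf t ht => by
    simpa [e, tensorPowerEquivEnd_rho2 B hB hf] using
      commutator_mem_flagMaps_of_mem (h1 f hf) (h2 f hf) ht
  obtain ⟨ψ, hψτ, hψid, hψcomm⟩ := exists_commuting_projection_of_isCompl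
    (S := rho2 '' {f | IsSkew B f}) (Set.forall_mem_image.2 h1) (Set.forall_mem_image.2 h2)
    (C := C.map e.toLinearMap)
    (Set.forall_mem_image.2 fun f hf _ ⟨t, ht, hte⟩ =>
      ⟨rho2 f t, hC f hf t ht, by simp [← hte, e, tensorPowerEquivEnd_rho2 B hB hf]⟩)
    (Submodule.isCompl_map_of_isCompl_comap e (.of_eq hinf hsup))
  refine ⟨ψ ∘ₗ τ2.subtype, ?_, hψid, fun f hf x => ?_⟩
  · rintro _ ⟨x, rfl⟩
    exact hψτ x x.2
  · exact (LinearMap.congr_fun (hψcomm _ ⟨f, hf, rfl⟩) x).symm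

/-- If `V^{⊗2N}` is a completely reducible `so(V)`-module, then every inclusion
`0 ≠ τ₁ ⊊ τ₂ ⊆ V^{⊗N}` of subrepresentations splits: there is an `so(V)`-equivariant
projection `τ₂ → τ₁` restricting to the identity on `τ₁`. -/
theorem stmt15 {V : Type*} [AddCommGroup V] [Module ℂ V] [FiniteDimensional ℂ V]
    (B : V →ₗ[ℂ] V →ₗ[ℂ] ℂ) (hsymm : ∀ v w, B v w = B w v)
    (hnondeg : ∀ v, (∀ w, B v w = 0) → v = 0) (N : ℕ)
    (hcr : ∀ S : Submodule ℂ (⨂[ℂ] _i : Fin (2 * N), V), IsInvt B S →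
      ∃ S' : Submodule ℂ (⨂[ℂ] _i : Fin (2 * N), V),
        IsInvt B S' ∧ S ⊓ S' = ⊥ ∧ S ⊔ S' = ⊤)
    (τ1 τ2 : Submodule ℂ (⨂[ℂ] _i : Fin N, V))
    (h1 : IsInvt B τ1) (h2 : IsInvt B τ2)
    (h12 : τ1 ≤ τ2) (hne0 : τ1 ≠ ⊥) (hne : τ1 ≠ τ2) :
    ∃ π : τ2 →ₗ[ℂ] (⨂[ℂ] _i : Fin N, V),
      LinearMap.range π ≤ τ1 ∧
      (∀ (x : ⨂[ℂ] _i : Fin N, V) (hx : x ∈ τ1), π ⟨x, h12 hx⟩ = x) ∧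
      (∀ (f : Module.End ℂ V) (hf : IsSkew B f) (x : τ2),
        π ⟨rho2 f x.1, h2 f hf x.1 x.2⟩ = rho2 f (π x)) :=
  stmt15_general B hnondeg N hcr τ1 τ2 h1 h2 h12
end
end
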